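/- arXiv:1905.07942 — 4 statements merged into one kernel-verified Lean document; each statement's English description precedes it below -/
import Mathlib

section
/- For every bounded function φ: [0,∞) → ℝ of class C¹, there exists a sequence (tₙ) of nonnegative real numbers with tₙ → +∞ such that φ(tₙ) → limsup_{t→+∞} φ(t) and φ'(tₙ) → 0. -/
/-!
Pick `t₀` far out with `φ t₀ > L - ε/4`, where `L = limsup φ`, and maximise
`t ↦ φ t - (ε/2) (t - t₀)²` over `[t₀ - 1, t₀ + 1]`. Far out `φ < L + ε/4`, so the penalty makes
both endpoints lose to `t₀`: the maximum sits at an interior point `ξ`, where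
`φ' ξ = ε (ξ - t₀)` has size `< ε` while `φ ξ ≥ φ t₀`. Thus `(L, 0)` is a cluster point of
`(φ, φ')` at infinity, and a sequence realises it.
-/

open Filter Set

theorem exists_mem_Ioo_le_and_abs_deriv_lt {f : ℝ → ℝ} {a δ c : ℝ} (hδ : 0 < δ) (hc : 0 < c)
    (hf : ContinuousOn f (Icc (a - δ) (a + δ)))
    (hf' : DifferentiableOn ℝ f (Ioo (a - δ) (a + δ)))
    (hl : f (a - δ) < f a + c * δ ^ 2) (hr : f (a + δ) < f a + c * δ ^ 2) :
    ∃ ξ ∈ Ioo (a - δ) (a + δ), f a ≤ f ξ ∧ |deriv f ξ| < 2 * c * δ := by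
  set g : ℝ → ℝ := fun t => f t - c * (t - a) ^ 2
  have ha : a ∈ Icc (a - δ) (a + δ) := ⟨by linarith, by linarith⟩
  obtain ⟨ξ, hξ, hmax⟩ := isCompact_Icc.exists_isMaxOn (f := g)
    ⟨a, ha⟩ (hf.sub (by fun_prop))
  have hga : f a ≤ g ξ := by simpa [g] using hmax ha
  have hξ' : ξ ∈ Ioo (a - δ) (a + δ) := by
    refine ⟨lt_of_le_of_ne hξ.1 ?_, lt_of_le_of_ne hξ.2 ?_⟩ <;> rintro rfl <;> simp only [g] at hga
    · linarith
    · linarith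
  have hderiv : HasDerivAt g (deriv f ξ - c * (2 * (ξ - a))) ξ := by
    have hfξ := (hf'.differentiableAt (isOpen_Ioo.mem_nhds hξ')).hasDerivAt
    have hsq : HasDerivAt (fun t => c * (t - a) ^ 2) (c * (2 * (ξ - a))) ξ := by
      simpa using (((hasDerivAt_id ξ).sub_const a).pow 2).const_mul c
    exact hfξ.sub hsq
  have hzero := (hmax.isLocalMax (Icc_mem_nhds hξ'.1 hξ'.2)).hasDerivAt_eq_zero hderiv
  refine ⟨ξ, hξ', by nlinarith [sq_nonneg (ξ - a)], ?_⟩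
  rw [show deriv f ξ = 2 * c * (ξ - a) by linarith, abs_mul, abs_of_pos (by positivity)]
  exact mul_lt_mul_of_pos_left (abs_sub_lt_iff.2 ⟨by linarith [hξ'.2], by linarith [hξ'.1]⟩)
    (by positivity)

theorem mapClusterPt_limsup_deriv {φ : ℝ → ℝ} (hφ : Differentiable ℝ φ)
    (hb : IsBoundedUnder (· ≤ ·) atTop φ) (hc : IsCoboundedUnder (· ≤ ·) atTop φ) :
    MapClusterPt (limsup φ atTop, 0) atTop fun t => (φ t, deriv φ t) := by
  set L := limsup φ atTop
  refine Metric.nhds_basis_ball.mapClusterPt_iff_frequently.2 fun ε hε => frequently_atTop.2 ?_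
  intro T
  obtain ⟨T₁, hT₁⟩ := eventually_atTop.1 (eventually_lt_of_limsup_lt (by linarith) hb :
    ∀ᶠ t in atTop, φ t < L + ε / 4)
  obtain ⟨t₀, ht₀, hφt₀⟩ := frequently_atTop.1 (frequently_lt_of_lt_limsup hc (by linarith) :
    ∃ᶠ t in atTop, L - ε / 4 < φ t) (max T T₁ + 1)
  have hT : T ≤ t₀ - 1 ∧ T₁ ≤ t₀ - 1 := max_le_iff.1 (by linarith)
  obtain ⟨ξ, hξ, hle, hderiv⟩ := exists_mem_Ioo_le_and_abs_deriv_lt (a := t₀) (δ := 1)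
    (c := ε / 2) one_pos (by positivity) hφ.continuous.continuousOn hφ.differentiableOn
    (by linarith [hT₁ (t₀ - 1) hT.2]) (by linarith [hT₁ (t₀ + 1) (by linarith)])
  have hφξ := hT₁ ξ (by linarith [hξ.1])
  refine ⟨ξ, by linarith [hξ.1], ?_⟩
  rw [Metric.mem_ball, Prod.dist_eq, max_lt_iff, Real.dist_eq, Real.dist_eq, sub_zero,
    abs_sub_lt_iff]
  exact ⟨⟨by linarith, by linarith⟩, by linarith⟩

/-- For every bounded C¹ function φ : [0,∞) → ℝ there is a sequence tₙ → +∞ of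
nonnegative reals with φ(tₙ) → limsup φ and φ'(tₙ) → 0. -/
theorem stmt_0 (φ : ℝ → ℝ) (hφ : ContDiff ℝ 1 φ)
    (hbound : ∃ M, ∀ t ≥ (0:ℝ), |φ t| ≤ M) :
    ∃ t : ℕ → ℝ, (∀ n, 0 ≤ t n) ∧ Tendsto t atTop atTop ∧
      Tendsto (fun n => φ (t n)) atTop (nhds (limsup φ atTop)) ∧
      Tendsto (fun n => deriv φ (t n)) atTop (nhds 0) := by
  obtain ⟨M, hM⟩ := hbound
  have hb : IsBoundedUnder (· ≤ ·) atTop φ := isBoundedUnder_of_eventually_le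
    ((eventually_ge_atTop 0).mono fun t ht => (abs_le.1 (hM t ht)).2)
  have hc : IsCoboundedUnder (· ≤ ·) atTop φ := isCoboundedUnder_le_of_eventually_le atTop
    ((eventually_ge_atTop 0).mono fun t ht => (abs_le.1 (hM t ht)).1)
  obtain ⟨ψ, hψφ, hψ⟩ :=
    (mapClusterPt_limsup_deriv (hφ.differentiable one_ne_zero) hb hc).exists_seq_tendsto
  obtain ⟨N, hN⟩ := eventually_atTop.1 (hψ.eventually_ge_atTop 0)
  have hshift := tendsto_add_atTop_nat N
  exact ⟨fun n => ψ (n + N), fun n => hN _ (Nat.le_add_left N n), hψ.comp hshift,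
    hψφ.fst_nhds.comp hshift, hψφ.snd_nhds.comp hshift⟩
end

section
/- Let m > 0, let ψ: [0,∞) → ℝ be continuous and bounded, and let y ∈ C²([0,∞), ℝ) be a bounded solution to y''(t) + y'(t) − m·y(t) = ψ(t). Then limsup_{t→+∞} |y(t)| ≤ (1/m)·limsup_{t→+∞} |ψ(t)| and limsup_{t→+∞} |y'(t)| ≤ 2·limsup_{t→+∞} |ψ(t)|. -/
/-!
Write `L = limsup |ψ|` and factor `X² + X - m = (X - r) (X + (r + 1))` with `r > 0`.
For `a > 0`, the operator `w ↦ w' + a w` is stable forwards in time (integrating factor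
`exp (a t)`), so an ultimate bound `c` on `|w' + a w|` gives the ultimate bound `c / a` on `|w|`;
the operator `w ↦ w' - a w` is stable backwards in time, so the same holds for it provided `w`
is bounded. Since `y'' + y' = ψ + m y` is bounded, so is `y'`, hence `u = y' + (r + 1) y` is a
bounded solution of `u' - r u = ψ` and `|u|` is ultimately bounded by `L / r`. Then
`y' + (r + 1) y = u` bounds `|y|` ultimately by `L / (r (r + 1)) = L / m`, and finally
`y'' + y' = ψ + m y` bounds `|y'|` ultimately by `L + m (L / m) = 2 L`.
-/

open Filter Real Set Topology

/-- This is `limsup |f| ≤ L` together with the boundedness that makes the real `limsup`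
meaningful. -/
def UltimatelyBoundedBy {α : Type*} (l : Filter α) (f : α → ℝ) (L : ℝ) : Prop :=
  ∀ c > L, ∀ᶠ x in l, |f x| ≤ c

namespace UltimatelyBoundedBy

variable {α : Type*} {l : Filter α} {f g : α → ℝ} {L L' : ℝ}

theorem congr (hf : UltimatelyBoundedBy l f L) (hfg : f =ᶠ[l] g) : UltimatelyBoundedBy l g L :=
  fun c hc => (hf c hc).congr (hfg.mono fun _ hx => by rw [hx])

theorem of_eventually_le {M : ℝ} (h : ∀ᶠ x in l, |f x| ≤ M) : UltimatelyBoundedBy l f M :=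
  fun _ hc => h.mono fun _ hx => hx.trans hc.le

theorem of_isBoundedUnder (h : IsBoundedUnder (· ≤ ·) l fun x => |f x|) :
    UltimatelyBoundedBy l f (limsup (fun x => |f x|) l) :=
  fun _ hc => (eventually_lt_of_limsup_lt hc h).mono fun _ hx => hx.le

theorem add (hf : UltimatelyBoundedBy l f L) (hg : UltimatelyBoundedBy l g L') :
    UltimatelyBoundedBy l (fun x => f x + g x) (L + L') := by
  intro c hc
  filter_upwards [hf (L + (c - (L + L')) / 2) (by linarith),
    hg (L' + (c - (L + L')) / 2) (by linarith)] with x hfx hgx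
  linarith [abs_add_le (f x) (g x)]

theorem const_mul (hf : UltimatelyBoundedBy l f L) {k : ℝ} (hk : 0 ≤ k) :
    UltimatelyBoundedBy l (fun x => k * f x) (k * L) := by
  intro c hc
  rcases hk.eq_or_lt with rfl | hk
  · exact Eventually.of_forall fun _ => by simpa using hc.le
  filter_upwards [hf (c / k) (by rwa [gt_iff_lt, lt_div_iff₀' hk])] with x hx
  rw [abs_mul, abs_of_pos hk]
  exact (le_div_iff₀' hk).1 hx

theorem limsup_abs_le [l.NeBot] (hf : UltimatelyBoundedBy l f L) :
    limsup (fun x => |f x|) l ≤ L :=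
  le_of_forall_gt_imp_ge_of_dense fun c hc =>
    limsup_le_of_le (isCoboundedUnder_le_of_le l fun _ => abs_nonneg _) (hf c hc)

end UltimatelyBoundedBy

theorem hasDerivAt_exp_mul_mul_sub {w : ℝ → ℝ} (hw : Differentiable ℝ w) (k d s : ℝ) :
    HasDerivAt (fun s => exp (k * s) * (w s - d)) (exp (k * s) * (deriv w s + k * (w s - d))) s :=
  (((hasDerivAt_id' s).const_mul k).exp.mul ((hw s).hasDerivAt.sub_const d)).congr_deriv (by ring)

theorem tendsto_exp_neg_mul_mul_atTop {a : ℝ} (ha : 0 < a) (K : ℝ) :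
    Tendsto (fun t => exp (-(a * t)) * K) atTop (𝓝 0) := by
  simpa using (tendsto_exp_neg_atTop_nhds_zero.comp (tendsto_id.const_mul_atTop ha)).mul_const K

/-- `exp (a t) (w t - c / a)` is antitone once `w' + a w ≤ c`. -/
theorem eventually_le_of_deriv_add_mul_le {w : ℝ → ℝ} {a c c' : ℝ} (hw : Differentiable ℝ w)
    (ha : 0 < a) (h : ∀ᶠ t in atTop, deriv w t + a * w t ≤ c) (hc' : c / a < c') :
    ∀ᶠ t in atTop, w t ≤ c' := by
  obtain ⟨T, hT⟩ := eventually_atTop.1 h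
  set φ : ℝ → ℝ := fun s => exp (a * s) * (w s - c / a)
  have hφ := hasDerivAt_exp_mul_mul_sub hw a (c / a)
  have hanti : AntitoneOn φ (Ici T) := by
    refine antitoneOn_of_deriv_nonpos (convex_Ici T)
      (fun x _ => (hφ x).continuousAt.continuousWithinAt)
      (fun x _ => (hφ x).differentiableAt.differentiableWithinAt) fun x hx => ?_
    rw [interior_Ici] at hx
    rw [(hφ x).deriv, show deriv w x + a * (w x - c / a) = deriv w x + a * w x - c by
      field_simp; ring]
    exact mul_nonpos_of_nonneg_of_nonpos (exp_pos _).le (sub_nonpos.2 (hT x hx.le))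
  filter_upwards [eventually_ge_atTop T,
    (tendsto_exp_neg_mul_mul_atTop ha (φ T)).eventually (gt_mem_nhds (sub_pos.2 hc'))]
    with t ht hsmall
  have hφt : w t - c / a = exp (-(a * t)) * φ t := by
    simp only [φ, ← mul_assoc, ← exp_add, neg_add_cancel, exp_zero, one_mul]
  have := mul_le_mul_of_nonneg_left (hanti self_mem_Ici ht ht) (exp_pos (-(a * t))).le
  linarith

/-- `exp (-a t) (w t - c / a)` is monotone once `a w - w' ≤ c`, and tends to `0` as `w` is
bounded above, so it is never positive. -/
theorem eventually_le_of_mul_sub_deriv_le {w : ℝ → ℝ} {a c M : ℝ} (hw : Differentiable ℝ w)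
    (ha : 0 < a) (hM : ∀ᶠ t in atTop, w t ≤ M) (h : ∀ᶠ t in atTop, a * w t - deriv w t ≤ c) :
    ∀ᶠ t in atTop, w t ≤ c / a := by
  obtain ⟨T, hT⟩ := eventually_atTop.1 h
  set φ : ℝ → ℝ := fun s => exp (-a * s) * (w s - c / a)
  have hφ := hasDerivAt_exp_mul_mul_sub hw (-a) (c / a)
  have hmono : MonotoneOn φ (Ici T) := by
    refine monotoneOn_of_deriv_nonneg (convex_Ici T)
      (fun x _ => (hφ x).continuousAt.continuousWithinAt)
      (fun x _ => (hφ x).differentiableAt.differentiableWithinAt) fun x hx => ?_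
    rw [interior_Ici] at hx
    rw [(hφ x).deriv, show deriv w x + -a * (w x - c / a) = c - (a * w x - deriv w x) by
      field_simp; ring]
    exact mul_nonneg (exp_pos _).le (sub_nonneg.2 (hT x hx.le))
  filter_upwards [eventually_ge_atTop T] with t ht
  have hφt : φ t ≤ 0 := by
    refine ge_of_tendsto (tendsto_exp_neg_mul_mul_atTop ha (M - c / a)) ?_
    filter_upwards [eventually_ge_atTop t, hM] with s hs hsM
    calc φ t ≤ φ s := hmono ht (ht.trans hs) hs
      _ ≤ exp (-(a * s)) * (M - c / a) := by
        rw [← neg_mul]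
        exact mul_le_mul_of_nonneg_left (by linarith) (exp_pos _).le
  linarith [nonpos_of_mul_nonpos_right hφt (exp_pos (-a * t))]

namespace UltimatelyBoundedBy

variable {w : ℝ → ℝ} {a c : ℝ}

theorem of_deriv_add_mul (h : UltimatelyBoundedBy atTop (fun t => deriv w t + a * w t) c)
    (hw : Differentiable ℝ w) (ha : 0 < a) : UltimatelyBoundedBy atTop w (c / a) := by
  intro c' hc'
  obtain ⟨c₀, hc₀, hc₀'⟩ := exists_between ((div_lt_iff₀ ha).1 hc')
  have hc₀a : c₀ / a < c' := (div_lt_iff₀ ha).2 hc₀'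
  have hupper := eventually_le_of_deriv_add_mul_le hw ha
    ((h c₀ hc₀).mono fun _ ht => (abs_le.1 ht).2) hc₀a
  have hlower := eventually_le_of_deriv_add_mul_le hw.neg ha
    ((h c₀ hc₀).mono fun t ht => by rw [Pi.neg_apply, deriv.neg]; linarith [(abs_le.1 ht).1]) hc₀a
  filter_upwards [hupper, hlower] with t h₁ h₂
  rw [Pi.neg_apply] at h₂
  exact abs_le.2 ⟨by linarith, h₁⟩

theorem of_deriv_sub_mul (h : UltimatelyBoundedBy atTop (fun t => deriv w t - a * w t) c)
    (hw : Differentiable ℝ w) (ha : 0 < a) {M : ℝ} (hM : UltimatelyBoundedBy atTop w M) :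
    UltimatelyBoundedBy atTop w (c / a) := by
  intro c' hc'
  obtain ⟨c₀, hc₀, hc₀'⟩ := exists_between ((div_lt_iff₀ ha).1 hc')
  have hc₀a : c₀ / a ≤ c' := ((div_lt_iff₀ ha).2 hc₀').le
  have hwM := hM (M + 1) (by linarith)
  have hupper := eventually_le_of_mul_sub_deriv_le (c := c₀) hw ha
    (hwM.mono fun _ ht => (abs_le.1 ht).2)
    ((h c₀ hc₀).mono fun _ ht => by linarith [(abs_le.1 ht).1])
  have hlower := eventually_le_of_mul_sub_deriv_le (c := c₀) (M := M + 1) hw.neg ha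
    (hwM.mono fun _ ht => by rw [Pi.neg_apply]; linarith [(abs_le.1 ht).1])
    ((h c₀ hc₀).mono fun t ht => by rw [Pi.neg_apply, deriv.neg]; linarith [(abs_le.1 ht).2])
  filter_upwards [hupper, hlower] with t h₁ h₂
  rw [Pi.neg_apply] at h₂
  exact abs_le.2 ⟨by linarith, by linarith⟩

end UltimatelyBoundedBy

theorem exists_pos_mul_add_one_eq {m : ℝ} (hm : 0 < m) : ∃ r > 0, r * (r + 1) = m := by
  have hs : sqrt (1 + 4 * m) ^ 2 = 1 + 4 * m := sq_sqrt (by linarith)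
  have hs1 : 1 < sqrt (1 + 4 * m) := by
    rw [lt_sqrt zero_le_one]
    linarith
  exact ⟨(sqrt (1 + 4 * m) - 1) / 2, by linarith, by linear_combination hs / 4⟩

theorem stmt_1_general (m : ℝ) (hm : 0 < m) (ψ y : ℝ → ℝ)
    (hψb : ∃ M, ∀ t ≥ (0:ℝ), |ψ t| ≤ M)
    (hy : ContDiff ℝ 2 y) (hyb : ∃ M, ∀ t ≥ (0:ℝ), |y t| ≤ M)
    (hode : ∀ t ≥ (0:ℝ), deriv (deriv y) t + deriv y t - m * y t = ψ t) :
    limsup (fun t => |y t|) atTop ≤ (1/m) * limsup (fun t => |ψ t|) atTop ∧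
    limsup (fun t => |deriv y t|) atTop ≤ 2 * limsup (fun t => |ψ t|) atTop := by
  obtain ⟨r, hr, hrm⟩ := exists_pos_mul_add_one_eq hm
  have hy₁ : Differentiable ℝ y := hy.differentiable two_ne_zero
  have hy₂ : Differentiable ℝ (deriv y) := hy.differentiable_deriv_two
  set L := limsup (fun t => |ψ t|) atTop
  obtain ⟨Mψ, hMψ⟩ := hψb
  obtain ⟨My, hMy⟩ := hyb
  have hψ : UltimatelyBoundedBy atTop ψ L :=
    .of_isBoundedUnder (isBoundedUnder_of_eventually_le ((eventually_ge_atTop 0).mono hMψ))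
  have hyM : UltimatelyBoundedBy atTop y My := .of_eventually_le ((eventually_ge_atTop 0).mono hMy)
  have hode₁ : (fun t => ψ t + m * y t) =ᶠ[atTop] fun t => deriv (deriv y) t + 1 * deriv y t :=
    (eventually_ge_atTop 0).mono fun t ht => by linarith [hode t ht]
  have hy'M := ((hψ.add (hyM.const_mul hm.le)).congr hode₁).of_deriv_add_mul hy₂ one_pos
  set u : ℝ → ℝ := fun t => deriv y t + (r + 1) * y t
  have hu : Differentiable ℝ u := hy₂.add (hy₁.const_mul _)
  have hode₂ : ψ =ᶠ[atTop] fun t => deriv u t - r * u t := by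
    filter_upwards [eventually_ge_atTop 0] with t ht
    have hu' : deriv u t = deriv (deriv y) t + (r + 1) * deriv y t :=
      ((hy₂ t).hasDerivAt.add ((hy₁ t).hasDerivAt.const_mul (r + 1))).deriv
    rw [hu']
    linear_combination -hode t ht + y t * hrm
  have huL := (hψ.congr hode₂).of_deriv_sub_mul hu hr (hy'M.add (hyM.const_mul (by positivity)))
  have hyL : UltimatelyBoundedBy atTop y (L / m) := by
    simpa [div_div, hrm] using huL.of_deriv_add_mul hy₁ (by positivity)
  have hy'L := ((hψ.add (hyL.const_mul hm.le)).congr hode₁).of_deriv_add_mul hy₂ one_pos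
  rw [mul_div_cancel₀ L hm.ne', div_one] at hy'L
  exact ⟨by simpa [div_eq_inv_mul] using hyL.limsup_abs_le,
    by simpa [two_mul] using hy'L.limsup_abs_le⟩

/-- Ultimate bounds for a bounded solution of y'' + y' - m y = ψ with m > 0. -/
theorem stmt_1 (m : ℝ) (hm : 0 < m) (ψ y : ℝ → ℝ)
    (hψc : Continuous ψ) (hψb : ∃ M, ∀ t ≥ (0:ℝ), |ψ t| ≤ M)
    (hy : ContDiff ℝ 2 y) (hyb : ∃ M, ∀ t ≥ (0:ℝ), |y t| ≤ M)
    (hode : ∀ t ≥ (0:ℝ), deriv (deriv y) t + deriv y t - m * y t = ψ t) :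
    limsup (fun t => |y t|) atTop ≤ (1/m) * limsup (fun t => |ψ t|) atTop ∧
    limsup (fun t => |deriv y t|) atTop ≤ 2 * limsup (fun t => |ψ t|) atTop :=
  stmt_1_general m hm ψ y hψb hy hyb hode
end

section
/- Let λ > 0 and let φ: [0,1] → ℝ be a smooth solution of φ'''' + λφ'' = 0 with φ(0) = φ'(0) = φ(1) = φ'(1) = 0. Write λ = 4α² with α > 0. If sin²α ≠ α·sin α·cos α, then φ ≡ 0. -/
open Set Real

private lemma lin2 (x : ℝ) (α : ℝ) : HasDerivAt (fun y : ℝ => 2*α*y) (2*α) x := by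
  simpa using (hasDerivAt_id x).const_mul (2*α)

/-- If λ = 4α² > 0 and sin²α ≠ α·sinα·cosα, then the only smooth solution of
φ'''' + λφ'' = 0 on [0,1] with clamped boundary conditions is φ ≡ 0. -/
theorem stmt_13 (lam α : ℝ) (hlam : 0 < lam) (hα : 0 < α) (h4 : lam = 4 * α^2)
    (φ : ℝ → ℝ) (hφ : ContDiff ℝ (⊤ : ℕ∞) φ)
    (hode : ∀ x ∈ Set.Icc (0:ℝ) 1,
      iteratedDeriv 4 φ x + lam * iteratedDeriv 2 φ x = 0)
    (h0 : φ 0 = 0) (h0' : deriv φ 0 = 0) (h1 : φ 1 = 0) (h1' : deriv φ 1 = 0)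
    (hdet : Real.sin α ^ 2 ≠ α * Real.sin α * Real.cos α) :
    ∀ x ∈ Set.Icc (0:ℝ) 1, φ x = 0 := by
  have hsm : ContDiff ℝ (⊤:ℕ∞) φ := hφ.of_le (by simp)
  have hd1 : ContDiff ℝ (⊤:ℕ∞) (deriv φ) := (contDiff_infty_iff_deriv.mp hsm).2
  have hd2 : ContDiff ℝ (⊤:ℕ∞) (deriv (deriv φ)) := (contDiff_infty_iff_deriv.mp hd1).2
  have hd3 : ContDiff ℝ (⊤:ℕ∞) (deriv (deriv (deriv φ))) := (contDiff_infty_iff_deriv.mp hd2).2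
  have hone : (1:ℕ∞) ≤ (⊤:ℕ∞) := le_top
  have e2 : iteratedDeriv 2 φ = deriv (deriv φ) := by
    simp [iteratedDeriv_eq_iterate, Function.iterate_succ', show (2:ℕ)=1+1 from rfl]
  have e4 : iteratedDeriv 4 φ = deriv (deriv (deriv (deriv φ))) := by
    simp [iteratedDeriv_eq_iterate, Function.iterate_succ', show (4:ℕ)=3+1 from rfl,
      show (3:ℕ)=2+1 from rfl, show (2:ℕ)=1+1 from rfl]
  rw [e2, e4] at hode
  set A := deriv (deriv φ) 0 with hA
  set B := deriv (deriv (deriv φ)) 0 with hB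
  have hlam0 : lam ≠ 0 := ne_of_gt hlam
  have hα0 : α ≠ 0 := ne_of_gt hα
  -- explicit solution coefficients
  set c1 := A/lam with hc1
  set c2 := B/lam with hc2
  set c3 := -A/lam with hc3
  set c4 := -B/(2*α*lam) with hc4
  set g0 : ℝ → ℝ := fun x => c1 + c2*x + c3*Real.cos (2*α*x) + c4*Real.sin (2*α*x) with hg0
  set g1 : ℝ → ℝ := fun x => c2 - 2*α*c3*Real.sin (2*α*x) + 2*α*c4*Real.cos (2*α*x) with hg1
  set g2 : ℝ → ℝ := fun x => -(4*α^2)*c3*Real.cos (2*α*x) - (4*α^2)*c4*Real.sin (2*α*x) with hg2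
  set g3 : ℝ → ℝ := fun x => (8*α^3)*c3*Real.sin (2*α*x) - (8*α^3)*c4*Real.cos (2*α*x) with hg3
  -- the vector field
  let p2 : (ℝ×ℝ×ℝ×ℝ) →L[ℝ] ℝ :=
    (ContinuousLinearMap.fst ℝ ℝ (ℝ×ℝ)).comp (ContinuousLinearMap.snd ℝ ℝ (ℝ×ℝ×ℝ))
  let p3 : (ℝ×ℝ×ℝ×ℝ) →L[ℝ] ℝ :=
    ((ContinuousLinearMap.fst ℝ ℝ ℝ).comp (ContinuousLinearMap.snd ℝ ℝ (ℝ×ℝ))).comp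
      (ContinuousLinearMap.snd ℝ ℝ (ℝ×ℝ×ℝ))
  let p4 : (ℝ×ℝ×ℝ×ℝ) →L[ℝ] ℝ :=
    ((ContinuousLinearMap.snd ℝ ℝ ℝ).comp (ContinuousLinearMap.snd ℝ ℝ (ℝ×ℝ))).comp
      (ContinuousLinearMap.snd ℝ ℝ (ℝ×ℝ×ℝ))
  let L : (ℝ×ℝ×ℝ×ℝ) →L[ℝ] (ℝ×ℝ×ℝ×ℝ) := p2.prod (p3.prod (p4.prod ((-lam) • p3)))
  have hL : ∀ u : ℝ×ℝ×ℝ×ℝ, L u = (u.2.1, u.2.2.1, u.2.2.2, -lam * u.2.2.1) := by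
    intro u; rfl
  set f : ℝ → ℝ×ℝ×ℝ×ℝ :=
    fun x => (φ x, deriv φ x, deriv (deriv φ) x, deriv (deriv (deriv φ)) x) with hf
  set g : ℝ → ℝ×ℝ×ℝ×ℝ := fun x => (g0 x, g1 x, g2 x, g3 x) with hg
  -- derivatives of g components
  have hg0' : ∀ x, HasDerivAt g0 (g1 x) x := by
    intro x
    have h := (((hasDerivAt_const x c1).add ((hasDerivAt_id x).const_mul c2)).add
      (((lin2 x α).cos).const_mul c3)).add (((lin2 x α).sin).const_mul c4)
    refine h.congr_deriv ?_
    simp [hg1]; ring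
  have hg1' : ∀ x, HasDerivAt g1 (g2 x) x := by
    intro x
    have h := ((hasDerivAt_const x c2).sub (((lin2 x α).sin).const_mul (2*α*c3))).add
      (((lin2 x α).cos).const_mul (2*α*c4))
    refine h.congr_deriv ?_
    simp [hg2]; ring
  have hg2' : ∀ x, HasDerivAt g2 (g3 x) x := by
    intro x
    have h := ((((lin2 x α).cos).const_mul (-(4*α^2)*c3)).sub
      (((lin2 x α).sin).const_mul ((4*α^2)*c4)))
    refine h.congr_deriv ?_
    simp [hg3]; ring
  have hg3' : ∀ x, HasDerivAt g3 (-lam * g2 x) x := by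
    intro x
    have h := ((((lin2 x α).sin).const_mul ((8*α^3)*c3)).sub
      (((lin2 x α).cos).const_mul ((8*α^3)*c4)))
    refine h.congr_deriv ?_
    simp [hg2, h4]; ring
  -- derivatives of f components
  have hf0' : ∀ x, HasDerivAt φ (deriv φ x) x :=
    fun x => (hsm.differentiable (by simp) x).hasDerivAt
  have hf1' : ∀ x, HasDerivAt (deriv φ) (deriv (deriv φ) x) x :=
    fun x => (hd1.differentiable (by simp) x).hasDerivAt
  have hf2' : ∀ x, HasDerivAt (deriv (deriv φ)) (deriv (deriv (deriv φ)) x) x :=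
    fun x => (hd2.differentiable (by simp) x).hasDerivAt
  have hf3' : ∀ x ∈ Set.Icc (0:ℝ) 1,
      HasDerivAt (deriv (deriv (deriv φ))) (-lam * deriv (deriv φ) x) x := by
    intro x hx
    have h := (hd3.differentiable (by simp) x).hasDerivAt
    have := hode x hx
    have hv : deriv (deriv (deriv (deriv φ))) x = -lam * deriv (deriv φ) x := by linarith
    rwa [hv] at h
  have hfd : ∀ x ∈ Set.Icc (0:ℝ) 1, HasDerivAt f (L (f x)) x := by
    intro x hx
    rw [hL]
    exact (hf0' x).prodMk ((hf1' x).prodMk ((hf2' x).prodMk (hf3' x hx)))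
  have hgd : ∀ x, HasDerivAt g (L (g x)) x := by
    intro x
    rw [hL]
    exact (hg0' x).prodMk ((hg1' x).prodMk ((hg2' x).prodMk (hg3' x)))
  -- initial conditions
  have hinit : f 0 = g 0 := by
    have l20 : 2*α*(0:ℝ) = 0 := by ring
    simp only [hf, hg, hg0, hg1, hg2, hg3, l20, Real.cos_zero, Real.sin_zero, h0, h0']
    refine Prod.ext ?_ (Prod.ext ?_ (Prod.ext ?_ ?_)) <;>
      simp [hc1, hc2, hc3, hc4, h4] <;> field_simp <;> ring
  -- uniqueness
  have huniq : Set.EqOn f g (Set.Icc 0 1) := by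
    refine ODE_solution_unique (v := fun _ u => L u) (K := ‖L‖₊) (fun _ => L.lipschitz) ?_ ?_ ?_ ?_ hinit
    · exact fun x hx => ((hfd x hx).continuousAt).continuousWithinAt
    · exact fun x hx => ((hfd x (Set.mem_Icc_of_Ico hx)).hasDerivWithinAt)
    · exact fun x hx => ((hgd x).continuousAt).continuousWithinAt
    · exact fun x hx => ((hgd x).hasDerivWithinAt)
  -- boundary conditions at 1
  have h1mem : (1:ℝ) ∈ Set.Icc (0:ℝ) 1 := by norm_num
  have hfg1 := huniq h1mem
  have eq1 : g0 1 = 0 := by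
    have := congrArg Prod.fst hfg1
    simp only [hf, hg] at this
    rw [← this, h1]
  have eq2 : g1 1 = 0 := by
    have := congrArg (fun p : ℝ×ℝ×ℝ×ℝ => p.2.1) hfg1
    simp only [hf, hg] at this
    rw [← this, h1']
  -- algebra: A = 0 and B = 0
  have pyth := Real.sin_sq_add_cos_sq α
  simp only [hg0, hg1, mul_one] at eq1 eq2
  rw [Real.sin_two_mul, Real.cos_two_mul, Real.cos_sq'] at eq1 eq2
  simp only [hc1, hc2, hc3, hc4] at eq1 eq2
  have hD : Real.sin α ^ 2 - α * Real.sin α * Real.cos α ≠ 0 := sub_ne_zero.mpr hdet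
  have e1' : 2*α*Real.sin α^2 * A + (α - Real.sin α * Real.cos α) * B = 0 := by
    linear_combination (norm := (field_simp; ring)) (α*lam) * eq1
  have e2' : 4*α*Real.sin α*Real.cos α * A + 2*Real.sin α^2 * B = 0 := by
    linear_combination (norm := (field_simp; ring)) lam * eq2
  have hA0 : A = 0 := by
    have key : A * (4*α*(Real.sin α ^ 2 - α * Real.sin α * Real.cos α)) = 0 := by
      linear_combination (2*Real.sin α^2) * e1' - (α - Real.sin α*Real.cos α) * e2' -
        4*α*A*Real.sin α^2 * pyth
    rcases mul_eq_zero.mp key with h | h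
    · exact h
    · exact absurd h (mul_ne_zero (by positivity) hD)
  have hB0 : B = 0 := by
    have key : B * (4*α*(Real.sin α ^ 2 - α * Real.sin α * Real.cos α)) = 0 := by
      linear_combination 2*α*Real.sin α^2 * e2' - 4*α*Real.sin α*Real.cos α * e1' -
        4*α*B*Real.sin α^2 * pyth
    rcases mul_eq_zero.mp key with h | h
    · exact h
    · exact absurd h (mul_ne_zero (by positivity) hD)
  -- conclusion
  intro x hx
  have hx' := congrArg Prod.fst (huniq hx)
  simp only [hf, hg] at hx'
  rw [hx', hg0]
  simp [hc1, hc2, hc3, hc4, hA0, hB0]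
end

section
/- For every f ∈ H¹₀((0,1)), define F(x) = ∫₀ˣ f(t)dt, F̂(x) = ∫₀ˣ F(t)dt, and u(x) = −F̂(x) + (3F̂(1) − F(1))x² + (F(1) − 2F̂(1))x³. Then u ∈ H³((0,1)) ∩ H²₀((0,1)) and −u''(x) + u''(0) + (u''(1) − u''(0))x = f(x) for all x ∈ (0,1). -/
/-! Two integrations of `f` give `F̂ ∈ C³` with `F̂'' = f`, so `u'' = -f + 2a + 6bx` with `a, b` the
coefficients of the cubic correction, which is chosen so that `u(1) = u'(1) = 0` (at `0` the
boundary values vanish already). Since `f(0) = f(1) = 0`, the affine interpolant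
`u''(0) + (u''(1) - u''(0))x` of `u''` is exactly `2a + 6bx`, and `-u'' + 2a + 6bx = f`. -/

section Primitive

variable {E : Type*} [NormedAddCommGroup E] [NormedSpace ℝ E] [CompleteSpace E] {f F : ℝ → E}

theorem hasDerivAt_of_forall_eq_integral (hf : Continuous f) {a : ℝ}
    (hF : ∀ x, F x = ∫ t in a..x, f t) (x : ℝ) : HasDerivAt F (f x) x := by
  obtain rfl : F = fun x => ∫ t in a..x, f t := funext hF
  exact (hf.integral_hasStrictDerivAt a x).hasDerivAt

theorem contDiff_succ_of_forall_eq_integral {n : ℕ∞} (hf : ContDiff ℝ n f) {a : ℝ}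
    (hF : ∀ x, F x = ∫ t in a..x, f t) : ContDiff ℝ (n + 1) F := by
  have hF' := hasDerivAt_of_forall_eq_integral hf.continuous hF
  rw [contDiff_succ_iff_deriv]
  refine ⟨fun x => (hF' x).differentiableAt, by simp, ?_⟩
  rwa [funext fun x => (hF' x).deriv]

end Primitive

section CubicCorrection

variable {f F G : ℝ → ℝ} (a b : ℝ)

theorem hasDerivAt_neg_add_mul_sq_add_mul_cube {x : ℝ} (hG : HasDerivAt G (F x) x) :
    HasDerivAt (fun x => -G x + a * x ^ 2 + b * x ^ 3) (-F x + 2 * a * x + 3 * b * x ^ 2) x := by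
  have hsq := (hasDerivAt_pow 2 x).const_mul a
  have hcube := (hasDerivAt_pow 3 x).const_mul b
  exact ((hG.neg.add hsq).add hcube).congr_deriv (by push_cast; ring)

theorem deriv_neg_add_mul_sq_add_mul_cube (hG : ∀ x, HasDerivAt G (F x) x) :
    deriv (fun x => -G x + a * x ^ 2 + b * x ^ 3) = fun x => -F x + 2 * a * x + 3 * b * x ^ 2 :=
  funext fun x => (hasDerivAt_neg_add_mul_sq_add_mul_cube a b (hG x)).deriv

theorem iteratedDeriv_two_neg_add_mul_sq_add_mul_cube (hG : ∀ x, HasDerivAt G (F x) x)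
    (hF : ∀ x, HasDerivAt F (f x) x) (x : ℝ) :
    iteratedDeriv 2 (fun x => -G x + a * x ^ 2 + b * x ^ 3) x = -f x + 2 * a + 6 * b * x := by
  rw [iteratedDeriv_succ, iteratedDeriv_one, deriv_neg_add_mul_sq_add_mul_cube a b hG]
  have hlin := (hasDerivAt_id' x).const_mul (2 * a)
  have hsq := (hasDerivAt_pow 2 x).const_mul (3 * b)
  exact (((hF x).neg.add hlin).add hsq).congr_deriv (by push_cast; ring) |>.deriv

end CubicCorrection

/-- Explicit solution formula for −u'' + u''(0) + (u''(1)−u''(0))x = f with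
clamped boundary conditions, for f vanishing at the endpoints. -/
theorem stmt_14 (f : ℝ → ℝ) (hf : ContDiff ℝ 1 f) (hf0 : f 0 = 0) (hf1 : f 1 = 0)
    (F Fhat u : ℝ → ℝ)
    (hF : ∀ x, F x = ∫ t in (0:ℝ)..x, f t)
    (hFhat : ∀ x, Fhat x = ∫ t in (0:ℝ)..x, F t)
    (hu : ∀ x, u x = -Fhat x + (3 * Fhat 1 - F 1) * x^2
      + (F 1 - 2 * Fhat 1) * x^3) :
    ContDiff ℝ 3 u ∧ u 0 = 0 ∧ deriv u 0 = 0 ∧ u 1 = 0 ∧ deriv u 1 = 0 ∧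
    ∀ x ∈ Set.Ioo (0:ℝ) 1,
      -(iteratedDeriv 2 u x) + iteratedDeriv 2 u 0 +
        (iteratedDeriv 2 u 1 - iteratedDeriv 2 u 0) * x = f x := by
  have hF_smooth : ContDiff ℝ 2 F := contDiff_succ_of_forall_eq_integral hf hF
  have hFhat_smooth : ContDiff ℝ 3 Fhat := contDiff_succ_of_forall_eq_integral hF_smooth hFhat
  have hF' := hasDerivAt_of_forall_eq_integral hf.continuous hF
  have hFhat' := hasDerivAt_of_forall_eq_integral hF_smooth.continuous hFhat
  have hF0 : F 0 = 0 := by simp [hF]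
  have hFhat0 : Fhat 0 = 0 := by simp [hFhat]
  obtain rfl := funext hu
  have hu' := deriv_neg_add_mul_sq_add_mul_cube (3 * Fhat 1 - F 1) (F 1 - 2 * Fhat 1) hFhat'
  have hu'' := iteratedDeriv_two_neg_add_mul_sq_add_mul_cube
    (3 * Fhat 1 - F 1) (F 1 - 2 * Fhat 1) hFhat' hF'
  refine ⟨by fun_prop, ?_, ?_, ?_, ?_, fun x _ => ?_⟩
  · simp [hFhat0]
  · simp [hu', hF0]
  · ring
  · rw [hu']
    ring
  · rw [hu'', hu'', hu'', hf0, hf1]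
    ring
end
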